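/- When 𝕊 = 𝕊', external bisimilarity coincides with internal state bisimilarity: ∼^×_{𝕊,𝕊} = ∼ₛ,𝕊. -/

import Mathlib

open MeasureTheory

/-- A labelled Markov process: a family of Markov (sub-probability) kernels indexed by labels. -/
structure LMP (L : Type*) (S : Type*) [MeasurableSpace S] where
  τ : L → S → Measure S
  prob : ∀ a s, τ a s Set.univ ≤ 1
  meas : ∀ a (B : Set S), MeasurableSet B → Measurable fun s => τ a s B

/-- A set `X` is `R`-closed if it contains every point related (in either direction)
to one of its points. -/
def RClosed {S : Type*} (R : S → S → Prop) (X : Set S) : Prop :=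
  ∀ x ∈ X, ∀ s, R x s ∨ R s x → s ∈ X

/-- A pair `(A, A')` is an `R`-closed pair. -/
def RClosedPair {S S' : Type*} (R : S → S' → Prop) (A : Set S) (A' : Set S') : Prop :=
  ∀ s s', R s s' → (s ∈ A ↔ s' ∈ A')

section LMPdefs

variable {L S S' : Type*} [MeasurableSpace S] [MeasurableSpace S']

/-- Internal state bisimulation on an LMP. -/
def IsStateBisim (M : LMP L S) (R : S → S → Prop) : Prop :=
  ∀ s t, R s t → ∀ C : Set S, MeasurableSet C → RClosed R C →
    ∀ a, M.τ a s C = M.τ a t C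

/-- State bisimilarity: two states are related by some state bisimulation. -/
def StateBisimilar (M : LMP L S) (s t : S) : Prop :=
  ∃ R, IsStateBisim M R ∧ R s t

/-- Zigzag morphism between LMPs. -/
def IsZigzag (M : LMP L S) (M' : LMP L S') (f : S → S') : Prop :=
  Measurable f ∧ ∀ a s (B : Set S'), MeasurableSet B → M.τ a s (f ⁻¹' B) = M'.τ a (f s) B

/-- External (×-)bisimulation between two LMPs. -/
def IsExtBisim (M : LMP L S) (M' : LMP L S') (R : S → S' → Prop) : Prop :=
  ∀ s s', R s s' → ∀ (A : Set S) (A' : Set S'), MeasurableSet A → MeasurableSet A' →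
    RClosedPair R A A' → ∀ a, M.τ a s A = M'.τ a s' A'

/-- External bisimilarity. -/
def ExtBisimilar (M : LMP L S) (M' : LMP L S') (s : S) (s' : S') : Prop :=
  ∃ R, IsExtBisim M M' R ∧ R s s'

/-- The copy of `A ⊕ A'` inside the disjoint sum. -/
def sumSet (A : Set S) (A' : Set S') : Set (S ⊕ S') := Sum.inl '' A ∪ Sum.inr '' A'

/-- The direct sum of two LMPs. -/
noncomputable def LMP.sum (M : LMP L S) (M' : LMP L S') : LMP L (S ⊕ S') where
  τ a := Sum.elim (fun s => (M.τ a s).map Sum.inl) (fun s' => (M'.τ a s').map Sum.inr)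
  prob a x := by
    cases x with
    | inl s =>
        simpa [Measure.map_apply measurable_inl MeasurableSet.univ] using M.prob a s
    | inr s' =>
        simpa [Measure.map_apply measurable_inr MeasurableSet.univ] using M'.prob a s'
  meas a B hB := by
    have h : (fun x => Sum.elim (fun s => (M.τ a s).map Sum.inl)
          (fun s' => (M'.τ a s').map Sum.inr) x B)
        = Sum.elim (fun s => M.τ a s (Sum.inl ⁻¹' B))
            (fun s' => M'.τ a s' (Sum.inr ⁻¹' B)) := by
      funext x
      cases x with
      | inl s => simp [Measure.map_apply measurable_inl hB]
      | inr s' => simp [Measure.map_apply measurable_inr hB]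
    rw [h]
    exact Measurable.sumElim (M.meas a _ (hB.preimage measurable_inl))
      (M'.meas a _ (hB.preimage measurable_inr))

end LMPdefs

/-!
An external bisimulation `R` on `S × S` is a state bisimulation, since an `R`-closed set `C` gives
the `R`-closed pair `(C, C)`. Conversely, state bisimilarity is itself a reflexive state
bisimulation, and for a reflexive `R` the `R`-closed pairs are exactly the pairs `(A, A)` with `A`
`R`-closed, so it is also an external bisimulation.
-/

section RClosed

variable {S : Type*} {R R' : S → S → Prop} {A : Set S}

theorem RClosed.mono (h : R ≤ R') (hA : RClosed R' A) : RClosed R A :=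
  fun x hx s hs => hA x hx s (hs.imp (h x s) (h s x))

theorem RClosed.rClosedPair (hA : RClosed R A) : RClosedPair R A A :=
  fun x y hxy => ⟨fun hx => hA x hx y (Or.inl hxy), fun hy => hA y hy x (Or.inr hxy)⟩

theorem RClosedPair.rClosed (hA : RClosedPair R A A) : RClosed R A := by
  rintro x hx s (hxs | hsx)
  · exact (hA x s hxs).1 hx
  · exact (hA s x hsx).2 hx

theorem RClosedPair.eq_of_refl [Std.Refl R] {A' : Set S} (hA : RClosedPair R A A') : A = A' :=
  Set.ext fun x => hA x x (refl x)

end RClosed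

section Bisim

variable {L S : Type*} [MeasurableSpace S] {M : LMP L S} {R : S → S → Prop}

theorem isStateBisim_eq : IsStateBisim M Eq := by
  rintro s t rfl _ _ _ _
  rfl

theorem isStateBisim_stateBisimilar : IsStateBisim M (StateBisimilar M) := by
  rintro s t ⟨R, hR, hst⟩ C hC hclosed
  exact hR s t hst C hC (hclosed.mono fun x y hxy => ⟨R, hR, hxy⟩)

instance : Std.Refl (StateBisimilar M) :=
  ⟨fun _ => ⟨Eq, isStateBisim_eq, rfl⟩⟩

theorem IsExtBisim.isStateBisim (hR : IsExtBisim M M R) : IsStateBisim M R :=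
  fun s t hst C hC hclosed => hR s t hst C C hC hC hclosed.rClosedPair

theorem IsStateBisim.isExtBisim_of_refl [Std.Refl R] (hR : IsStateBisim M R) :
    IsExtBisim M M R := by
  intro s t hst A A' hA _ hpair
  obtain rfl := hpair.eq_of_refl
  exact hR s t hst A hA hpair.rClosed

end Bisim

/-- For a single LMP, external bisimilarity coincides with internal state bisimilarity. -/
theorem stmt15 {L S : Type*} [MeasurableSpace S] (M : LMP L S) :
    ∀ s t : S, ExtBisimilar M M s t ↔ StateBisimilar M s t := by
  intro s t
  constructor
  · rintro ⟨R, hR, hst⟩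
    exact ⟨R, hR.isStateBisim, hst⟩
  · intro hst
    exact ⟨StateBisimilar M, isStateBisim_stateBisimilar.isExtBisim_of_refl, hst⟩
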